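/- If H is a maximal induced hypercube of dimension p ≥ 1 in the Lucas cube Λ_n, then b(H) = 0^n and t(H) = 0^{l_0} 1 0^{l_1} 1 ⋯ 1 0^{l_p} with l_0 + ⋯ + l_p = n - p, 0 ≤ l_0 ≤ 2, 0 ≤ l_p ≤ 2, 1 ≤ l_0 + l_p ≤ 2, and 1 ≤ l_i ≤ 2 for 1 ≤ i ≤ p-1; and every such string is the top vertex of a maximal hypercube. -/

import Mathlib

/-- The hypercube graph `Q_n` on binary strings of length `n`:
two strings are adjacent iff they differ in exactly one coordinate. -/
def Qgraph (n : ℕ) : SimpleGraph (Fin n → Bool) where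
  Adj x y := hammingDist x y = 1
  symm := ⟨fun x y h => by
    have h' : hammingDist x y = 1 := h
    show hammingDist y x = 1; rw [hammingDist_comm]; exact h'⟩
  loopless := ⟨fun x h => by
    have h' : hammingDist x x = 1 := h
    rw [hammingDist_self] at h'; exact absurd h' (by omega)⟩

/-- The weight of a binary string: its number of `1`s. -/
def wt {n : ℕ} (x : Fin n → Bool) : ℕ :=
  (Finset.univ.filter fun i => x i = true).card

/-- Fibonacci strings of length `n`: no two (cyclically non-wrapping) consecutive 1's. -/
def fibSet (n : ℕ) : Set (Fin n → Bool) :=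
  {s | ∀ i j : Fin n, (j : ℕ) = (i : ℕ) + 1 → ¬(s i = true ∧ s j = true)}

/-- Lucas strings of length `n`: Fibonacci strings whose first and last bits are not both 1. -/
def lucasSet (n : ℕ) : Set (Fin n → Bool) :=
  {s | s ∈ fibSet n ∧
    ∀ i j : Fin n, (i : ℕ) = 0 → (j : ℕ) = n - 1 → ¬(s i = true ∧ s j = true)}

/-- The binary string `0^{l_0} 1 0^{l_1} 1 ⋯ 1 0^{l_p}` determined by a list
of lengths of blocks of `0`'s. -/
def blockString (l : List ℕ) : List Bool :=
  List.intercalate [true] (l.map fun k => List.replicate k false)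

/-- The vertex of `Q_n` corresponding to the string `0^{l_0} 1 0^{l_1} 1 ⋯ 1 0^{l_p}`. -/
def ofBlocks (n : ℕ) (l : List ℕ) : Fin n → Bool :=
  fun i => (blockString l).getD (i : ℕ) false

/-- `V` induces a maximal hypercube of dimension `p` inside the subgraph of `Q_n`
induced by the vertex set `S`. -/
def IsMaxCube (n p : ℕ) (S : Set (Fin n → Bool)) (V : Set (Fin n → Bool)) : Prop :=
  V ⊆ S ∧ Nonempty ((Qgraph n).induce V ≃g Qgraph p) ∧
    ¬ ∃ V' : Set (Fin n → Bool), V ⊂ V' ∧ V' ⊆ S ∧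
      Nonempty ((Qgraph n).induce V' ≃g Qgraph (p + 1))

/-- Binomial coefficient `a` choose `b` with an integer lower argument,
equal to `0` when `b < 0`. -/
def chooseZ (a : ℕ) (b : ℤ) : ℕ := if 0 ≤ b then a.choose b.toNat else 0



namespace LMC
open Finset

variable {m n p : ℕ}

lemma bool_ne_not (b : Bool) : b ≠ !b := by cases b <;> decide

lemma bool_ne_iff {b c : Bool} : b ≠ c ↔ c = !b := by cases b <;> cases c <;> decide

def flip (a : Fin m) (x : Fin m → Bool) : Fin m → Bool := Function.update x a (!x a)

lemma flip_apply (a : Fin m) (x : Fin m → Bool) (j : Fin m) :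
    flip a x j = if j = a then !x a else x j := by
  simp [flip, Function.update_apply]

lemma flip_apply_self (a : Fin m) (x : Fin m → Bool) : flip a x a = !x a := by
  simp [flip_apply]

lemma flip_apply_ne (a : Fin m) (x : Fin m → Bool) {j : Fin m} (h : j ≠ a) :
    flip a x j = x j := by simp [flip_apply, h]

lemma flip_flip (a : Fin m) (x : Fin m → Bool) : flip a (flip a x) = x := by
  funext j
  by_cases h : j = a
  · subst h; simp [flip_apply]
  · simp [flip_apply, h]

lemma flip_comm {a b : Fin m} (hab : a ≠ b) (x : Fin m → Bool) :
    flip a (flip b x) = flip b (flip a x) := by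
  funext j
  by_cases h1 : j = a
  · subst h1; simp [flip_apply, hab, Ne.symm hab]
  · by_cases h2 : j = b
    · subst h2; simp [flip_apply, h1, hab, Ne.symm hab]
    · simp [flip_apply, h1, h2]

lemma hd_def (x y : Fin m → Bool) :
    hammingDist x y = (Finset.univ.filter fun i => x i ≠ y i).card := rfl

lemma hd_one_iff {x y : Fin m → Bool} :
    hammingDist x y = 1 ↔ ∃ a, y = flip a x := by
  constructor
  · intro h
    rw [hd_def] at h
    obtain ⟨a, ha⟩ := card_eq_one.mp h
    refine ⟨a, funext fun j => ?_⟩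
    by_cases hj : j = a
    · subst hj
      have hmem : j ∈ Finset.univ.filter fun i => x i ≠ y i := ha ▸ mem_singleton_self j
      have hne : x j ≠ y j := (mem_filter.mp hmem).2
      rw [flip_apply_self]
      exact bool_ne_iff.mp hne
    · have hnotmem : j ∉ Finset.univ.filter fun i => x i ≠ y i := by
        rw [ha]; simp [hj]
      have : ¬ x j ≠ y j := by
        intro hc; exact hnotmem (mem_filter.mpr ⟨mem_univ j, hc⟩)
      rw [flip_apply_ne _ _ hj]
      exact (not_ne_iff.mp this).symm
  · rintro ⟨a, rfl⟩
    rw [hd_def]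
    have : (Finset.univ.filter fun i => x i ≠ flip a x i) = {a} := by
      ext j
      by_cases hj : j = a
      · subst hj; simp [flip_apply_self, bool_ne_not]
      · simp [hj, flip_apply_ne _ _ hj]
    rw [this, card_singleton]

lemma hd_ne_one {x y : Fin m → Bool} {j1 j2 : Fin m} (h1 : x j1 ≠ y j1)
    (h2 : x j2 ≠ y j2) (h12 : j1 ≠ j2) : hammingDist x y ≠ 1 := by
  rw [hd_def]
  have hsub : ({j1, j2} : Finset (Fin m)) ⊆ Finset.univ.filter fun i => x i ≠ y i := by
    intro j hj
    rcases mem_insert.mp hj with h | h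
    · subst h; exact mem_filter.mpr ⟨mem_univ _, h1⟩
    · rw [mem_singleton.mp h]; exact mem_filter.mpr ⟨mem_univ _, h2⟩
  have := card_le_card hsub
  rw [card_pair h12] at this
  omega

lemma square {x y : Fin m → Bool} {a b : Fin m} (hab : a ≠ b)
    (h1 : hammingDist y (flip a x) = 1) (h2 : hammingDist y (flip b x) = 1)
    (hx : y ≠ x) : y = flip a (flip b x) := by
  obtain ⟨k, hk⟩ := hd_one_iff.mp ((hammingDist_comm _ _).trans h1 : hammingDist (flip a x) y = 1)
  by_cases hka : k = a
  · subst hka; rw [hk, flip_flip] at hx; exact absurd rfl hx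
  by_cases hkb : k = b
  · subst hkb; rw [hk, flip_comm hab]
  · exfalso
    apply hd_ne_one (j1 := a) (j2 := k) _ _ (Ne.symm hka) h2
    · rw [hk, flip_apply_ne _ _ (Ne.symm hka), flip_apply_self,
        flip_apply_ne _ _ hab]
      exact Ne.symm (bool_ne_not _)
    · rw [hk, flip_apply_self, flip_apply_ne _ _ hka,
        flip_apply_ne _ _ hkb]
      exact Ne.symm (bool_ne_not _)

lemma hd_flip (a : Fin m) (x : Fin m → Bool) : hammingDist x (flip a x) = 1 :=
  hd_one_iff.mpr ⟨a, rfl⟩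

/-! ### weight -/

lemma wt_def (x : Fin m → Bool) : wt x = (Finset.univ.filter fun i => x i = true).card := rfl

lemma wt_false : wt (fun _ : Fin m => false) = 0 := by
  rw [wt_def]; simp

lemma wt_eq_zero_iff {x : Fin m → Bool} : wt x = 0 ↔ x = fun _ => false := by
  rw [wt_def, card_eq_zero, filter_eq_empty_iff]
  constructor
  · intro h; funext j; simpa using h (mem_univ j)
  · intro h j _; rw [h]; simp

lemma wt_flip_true {x : Fin m → Bool} {a : Fin m} (h : x a = true) :
    wt (flip a x) + 1 = wt x := by
  rw [wt_def, wt_def]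
  have : (Finset.univ.filter fun i => flip a x i = true)
      = (Finset.univ.filter fun i => x i = true).erase a := by
    ext j
    by_cases hj : j = a
    · subst hj; simp [flip_apply_self, h]
    · simp [flip_apply_ne _ _ hj, hj]
  rw [this]
  exact card_erase_add_one (mem_filter.mpr ⟨mem_univ _, h⟩)

lemma exists_two {x : Fin m → Bool} (h : 2 ≤ wt x) :
    ∃ a b, a ≠ b ∧ x a = true ∧ x b = true := by
  rw [wt_def] at h
  obtain ⟨a, ha, b, hb, hab⟩ := one_lt_card.mp (by omega : 1 < (Finset.univ.filter fun i => x i = true).card)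
  exact ⟨a, b, hab, (mem_filter.mp ha).2, (mem_filter.mp hb).2⟩

lemma wt_one {x : Fin m → Bool} (h : wt x = 1) :
    ∃ a, x = flip a (fun _ => false) := by
  rw [wt_def] at h
  obtain ⟨a, ha⟩ := card_eq_one.mp h
  refine ⟨a, funext fun j => ?_⟩
  by_cases hj : j = a
  · subst hj
    have : j ∈ Finset.univ.filter fun i => x i = true := ha ▸ mem_singleton_self j
    rw [(mem_filter.mp this).2, flip_apply_self]; rfl
  · have : j ∉ Finset.univ.filter fun i => x i = true := by rw [ha]; simp [hj]
    have hx : x j ≠ true := fun hc => this (mem_filter.mpr ⟨mem_univ _, hc⟩)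
    rw [flip_apply_ne _ _ hj]
    simpa using hx

lemma wt_le_of_le {x y : Fin m → Bool} (h : ∀ j, x j = true → y j = true) :
    wt x ≤ wt y := by
  rw [wt_def, wt_def]
  exact card_le_card fun j hj => mem_filter.mpr ⟨mem_univ _, h j (mem_filter.mp hj).2⟩

def chi (D : Finset (Fin m)) : Fin m → Bool := fun j => decide (j ∈ D)

lemma chi_apply (D : Finset (Fin m)) (j : Fin m) : chi D j = true ↔ j ∈ D := by
  simp [chi]

lemma wt_chi (D : Finset (Fin m)) : wt (chi D) = D.card := by
  rw [wt_def]
  congr 1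
  ext j; simp [chi]


/-! ### Faces -/

def Face (c : Fin m → Bool) (D : Finset (Fin m)) : Set (Fin m → Bool) :=
  {x | ∀ j ∉ D, x j = c j}

lemma self_mem_face (c : Fin m → Bool) (D : Finset (Fin m)) : c ∈ Face c D :=
  fun _ _ => rfl

lemma face_congr {c c' : Fin m → Bool} {D : Finset (Fin m)}
    (h : ∀ j ∉ D, c j = c' j) : Face c D = Face c' D := by
  ext x
  constructor <;> intro hx j hj
  · rw [hx j hj, h j hj]
  · rw [hx j hj, h j hj]

lemma hd_restrict {D : Finset (Fin m)} {x y : Fin m → Bool}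
    (h : ∀ j ∉ D, x j = y j) :
    hammingDist x y = hammingDist (fun k : Fin D.card => x (D.equivFin.symm k))
      (fun k : Fin D.card => y (D.equivFin.symm k)) := by
  rw [hd_def, hd_def]
  have hmemD : ∀ j, x j ≠ y j → j ∈ D := by
    intro j hj
    by_contra hc
    exact hj (h j hc)
  refine card_bij (fun j hj => D.equivFin ⟨j, hmemD j (mem_filter.mp hj).2⟩) ?_ ?_ ?_
  · intro j hj
    simp only [mem_filter, mem_univ, true_and, Equiv.symm_apply_apply]
    exact (mem_filter.mp hj).2
  · intro j1 h1 j2 h2 heq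
    have := D.equivFin.injective heq
    exact congrArg Subtype.val this
  · intro k hk
    have hk' : x ↑(D.equivFin.symm k) ≠ y ↑(D.equivFin.symm k) := (mem_filter.mp hk).2
    refine ⟨↑(D.equivFin.symm k), mem_filter.mpr ⟨mem_univ _, hk'⟩, ?_⟩
    show D.equivFin ⟨↑(D.equivFin.symm k), _⟩ = k
    have : (⟨↑(D.equivFin.symm k), hmemD _ hk'⟩ : {j // j ∈ D}) = D.equivFin.symm k :=
      Subtype.ext rfl
    rw [this, Equiv.apply_symm_apply]

noncomputable def faceEquiv (c : Fin m → Bool) (D : Finset (Fin m)) :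
    Face c D ≃ (Fin D.card → Bool) where
  toFun x := fun k => x.1 (D.equivFin.symm k)
  invFun u := ⟨fun j => if h : j ∈ D then u (D.equivFin ⟨j, h⟩) else c j,
    fun j hj => by simp [hj]⟩
  left_inv x := by
    apply Subtype.ext
    funext j
    by_cases h : j ∈ D
    · simp only [h, dif_pos]
      exact congrArg x.1 (congrArg Subtype.val (D.equivFin.symm_apply_apply ⟨j, h⟩))
    · simp only [h, dif_neg, not_false_iff]
      exact (x.2 j h).symm
  right_inv u := by
    funext k
    simp only []
    rw [dif_pos (D.equivFin.symm k).2]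
    congr 1
    simpa using D.equivFin.apply_symm_apply k

noncomputable def faceIso (c : Fin m → Bool) (D : Finset (Fin m)) :
    (Qgraph m).induce (Face c D) ≃g Qgraph D.card where
  toEquiv := faceEquiv c D
  map_rel_iff' := by
    intro x y
    show hammingDist (β := fun _ : Fin D.card => Bool) _ _ = 1 ↔ hammingDist x.1 y.1 = 1
    have h : ∀ j ∉ D, x.1 j = y.1 j := fun j hj => (x.2 j hj).trans (y.2 j hj).symm
    rw [hd_restrict h]
    rfl

/-! ### Classification of induced hypercubes -/

lemma cube_classify {V : Set (Fin n → Bool)} (f : Qgraph p ≃g (Qgraph n).induce V) :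
    ∃ (c : Fin n → Bool) (D : Finset (Fin n)), D.card = p ∧ V = Face c D := by
  set zero : Fin p → Bool := fun _ => false with hzero
  set F : (Fin p → Bool) → (Fin n → Bool) := fun u => (f u).1 with hF
  have hFinj : Function.Injective F := fun u v h => f.injective (Subtype.ext h)
  have hFadj : ∀ u v : Fin p → Bool, hammingDist u v = 1 →
      hammingDist (F u) (F v) = 1 := by
    intro u v h
    exact (f.map_adj_iff (v := u) (w := v)).mpr h
  have hd' : ∀ i : Fin p, ∃ a, F (flip i zero) = flip a (F zero) := fun i =>
    hd_one_iff.mp (hFadj zero (flip i zero) (hd_flip i zero))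
  choose d hd using hd'
  have hdinj : Function.Injective d := by
    intro i j hij
    have h1 : F (flip i zero) = F (flip j zero) := by rw [hd i, hd j, hij]
    have h2 := congrFun (hFinj h1) j
    by_contra hne
    rw [flip_apply_ne _ _ (Ne.symm hne), flip_apply_self] at h2
    simp [hzero] at h2
  set c : Fin n → Bool := F zero with hc
  set mask : (Fin p → Bool) → Fin n → Bool :=
    fun u j => xor (decide (∃ i, d i = j ∧ u i = true)) (c j) with hmask
  have key : ∀ (a : Fin p) (w : Fin p → Bool),
      (∃ i, d i = d a ∧ w i = true) ↔ w a = true :=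
    fun a w => ⟨fun ⟨i, hi, hw⟩ => (hdinj hi) ▸ hw, fun h => ⟨a, rfl, h⟩⟩
  have mask_zero : mask zero = c := by
    funext j
    simp [hmask, hzero]
  have mask_flip : ∀ (a : Fin p) (v : Fin p → Bool),
      mask (flip a v) = flip (d a) (mask v) := by
    intro a v
    funext j
    by_cases hj : j = d a
    · subst hj
      rw [flip_apply_self, hmask]
      simp only []
      simp only [key, flip_apply_self, Bool.decide_coe]
      cases v a <;> cases c (d a) <;> rfl
    · rw [flip_apply_ne _ _ hj, hmask]
      simp only []
      congr 1
      apply decide_eq_decide.mpr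
      constructor
      · rintro ⟨i, rfl, hw⟩
        have hia : i ≠ a := fun h => hj (by rw [h])
        exact ⟨i, rfl, by rwa [flip_apply_ne _ _ hia] at hw⟩
      · rintro ⟨i, rfl, hw⟩
        have hia : i ≠ a := fun h => hj (by rw [h])
        exact ⟨i, rfl, by rwa [flip_apply_ne _ _ hia]⟩
  have main : ∀ (N : ℕ) (u : Fin p → Bool), wt u = N → F u = mask u := by
    intro N
    induction N using Nat.strong_induction_on with
    | _ N ih =>
      intro u hu
      match N, hu with
      | 0, hu =>
        rw [wt_eq_zero_iff.mp hu, ← hzero, mask_zero]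
      | 1, hu =>
        obtain ⟨a, rfl⟩ := wt_one hu
        rw [← hzero, hd a, mask_flip, mask_zero]
      | (N2 + 2), hu =>
        obtain ⟨a, b, hab, hua, hub⟩ := exists_two (x := u) (by omega)
        have hu1b : flip a u b = true := by rwa [flip_apply_ne _ _ (Ne.symm hab)]
        have hw1 : wt (flip a u) + 1 = wt u := wt_flip_true hua
        have hw2 : wt (flip b u) + 1 = wt u := wt_flip_true hub
        have hw0 : wt (flip b (flip a u)) + 1 = wt (flip a u) := wt_flip_true hu1b
        have hlt1 : wt (flip a u) < N2 + 2 := by omega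
        have hlt2 : wt (flip b u) < N2 + 2 := by omega
        have hlt0 : wt (flip b (flip a u)) < N2 + 2 := by omega
        have e1 : F (flip a u) = mask (flip a u) := ih (wt (flip a u)) hlt1 _ rfl
        have e2 : F (flip b u) = mask (flip b u) := ih (wt (flip b u)) hlt2 _ rfl
        have e0 : F (flip b (flip a u)) = mask (flip b (flip a u)) :=
          ih (wt (flip b (flip a u))) hlt0 _ rfl
        have A1 : hammingDist (F u) (F (flip a u)) = 1 := hFadj _ _ (hd_flip a u)
        have A2 : hammingDist (F u) (F (flip b u)) = 1 := hFadj _ _ (hd_flip b u)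
        have hne0 : F u ≠ mask (flip b (flip a u)) := by
          rw [← e0]
          intro h
          have := congrFun (hFinj h) a
          rw [flip_apply_ne _ _ hab, flip_apply_self, hua] at this
          simp at this
        -- rewrite the two masks as flips of mask u0
        have r1 : mask (flip a u) = flip (d b) (mask (flip b (flip a u))) := by
          rw [mask_flip b (flip a u), flip_flip]
        have r2 : mask (flip b u) = flip (d a) (mask (flip b (flip a u))) := by
          have : flip b u = flip a (flip b (flip a u)) := by
            rw [flip_comm hab (flip a u), flip_flip]
          rw [this, mask_flip]
        rw [e1, r1] at A1
        rw [e2, r2] at A2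
        have hsq := square (fun h => hab (hdinj h.symm) : d b ≠ d a) A1 A2 hne0
        rw [hsq, ← mask_flip, ← mask_flip, flip_comm hab (flip a u), flip_flip, flip_flip]
  have hmain : ∀ u, F u = mask u := fun u => main (wt u) u rfl
  refine ⟨c, Finset.image d Finset.univ, ?_, ?_⟩
  · rw [Finset.card_image_of_injective _ hdinj, Finset.card_univ, Fintype.card_fin]
  · ext x
    constructor
    · intro hx
      obtain ⟨u, hu⟩ : ∃ u, F u = x :=
        ⟨f.symm ⟨x, hx⟩, congrArg Subtype.val (f.apply_symm_apply ⟨x, hx⟩)⟩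
      intro j hj
      rw [← hu, hmain u, hmask]
      simp only []
      have : ¬ ∃ i, d i = j ∧ u i = true := by
        rintro ⟨i, rfl, -⟩
        exact hj (Finset.mem_image.mpr ⟨i, Finset.mem_univ i, rfl⟩)
      rw [decide_eq_false this, Bool.false_xor]
    · intro hx
      set u : Fin p → Bool := fun i => xor (x (d i)) (c (d i)) with hu
      have : mask u = x := by
        funext j
        by_cases hj : ∃ i, d i = j
        · obtain ⟨i, rfl⟩ := hj
          rw [hmask]
          simp only []
          simp only [key, Bool.decide_coe, hu]
          cases x (d i) <;> cases c (d i) <;> rfl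
        · have hjD : j ∉ Finset.image d Finset.univ := by
            intro hmem
            obtain ⟨i, -, rfl⟩ := Finset.mem_image.mp hmem
            exact hj ⟨i, rfl⟩
          rw [hmask]
          simp only []
          rw [decide_eq_false (by rintro ⟨i, rfl, -⟩; exact hj ⟨i, rfl⟩)]
          rw [Bool.false_xor]
          exact (hx j hjD).symm
      rw [← this, ← hmain u]
      exact (f u).2

/-! ### Lucas set basics -/

lemma lucas_mono {x y : Fin m → Bool} (hxy : ∀ j, x j = true → y j = true)
    (hy : y ∈ lucasSet m) : x ∈ lucasSet m := by
  obtain ⟨hfib, hend⟩ := hy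
  constructor
  · intro i j hij ⟨h1, h2⟩
    exact hfib i j hij ⟨hxy i h1, hxy j h2⟩
  · intro i j hi hj ⟨h1, h2⟩
    exact hend i j hi hj ⟨hxy i h1, hxy j h2⟩

lemma mem_face_zero_iff {D : Finset (Fin m)} {x : Fin m → Bool} :
    x ∈ Face (fun _ => false) D ↔ ∀ j, x j = true → j ∈ D := by
  constructor
  · intro hx j hj
    by_contra hc
    rw [hx j hc] at hj
    exact Bool.false_ne_true hj
  · intro h j hj
    by_contra hc
    exact hj (h j (by simpa using hc))

lemma chi_mem_face_zero (D : Finset (Fin m)) : chi D ∈ Face (fun _ => false) D :=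
  mem_face_zero_iff.mpr fun j hj => (chi_apply D j).mp hj

lemma zero_mem_face_zero (D : Finset (Fin m)) :
    (fun _ => false) ∈ Face (fun _ => false) D := fun _ _ => rfl

/-- key extension fact: if the top of a face over `insert a D` is Lucas, the whole
face is contained in the Lucas set -/
lemma face_zero_subset_lucas {D : Finset (Fin m)} (h : chi D ∈ lucasSet m) :
    Face (fun _ => false) D ⊆ lucasSet m := fun x hx =>
  lucas_mono (fun j hj => (chi_apply D j).mpr (mem_face_zero_iff.mp hx j hj)) h

lemma update_chi (D : Finset (Fin m)) (a : Fin m) :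
    Function.update (chi D) a true = chi (insert a D) := by
  funext j
  by_cases hj : j = a
  · subst hj; simp [chi, Function.update_self]
  · rw [Function.update_of_ne hj]
    simp [chi, hj]

/-! ### Maximal cubes and maximal independent sets -/

def MaxInd (t : Fin m → Bool) : Prop :=
  ∀ a, t a = false → Function.update t a true ∉ lucasSet m

lemma wt_le_card_of_face {D : Finset (Fin m)} {x : Fin m → Bool}
    (hx : x ∈ Face (fun _ => false) D) : wt x ≤ D.card := by
  rw [← wt_chi D]
  exact wt_le_of_le fun j hj => (chi_apply D j).mpr (mem_face_zero_iff.mp hx j hj)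

lemma eq_chi_of_max {D : Finset (Fin m)} {t : Fin m → Bool}
    (ht : t ∈ Face (fun _ => false) D) (hw : D.card ≤ wt t) : t = chi D := by
  have h1 : wt t ≤ D.card := wt_le_card_of_face ht
  have h2 : (Finset.univ.filter fun i => t i = true) ⊆ D := fun j hj =>
    mem_face_zero_iff.mp ht j (mem_filter.mp hj).2
  have h3 : (Finset.univ.filter fun i => t i = true) = D :=
    Finset.eq_of_subset_of_card_le h2 (by rw [← wt_def]; omega)
  funext j
  by_cases hj : j ∈ D
  · rw [← h3] at hj
    rw [(mem_filter.mp hj).2, eq_comm, chi_apply]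
    rwa [h3] at hj
  · have : j ∉ Finset.univ.filter fun i => t i = true := h3 ▸ hj
    have ht' : t j ≠ true := fun hc => this (mem_filter.mpr ⟨mem_univ _, hc⟩)
    have : chi D j = false := by simp [chi, hj]
    rw [this]
    simpa using ht'

lemma struct1 {V : Set (Fin n → Bool)} (hV : IsMaxCube n p (lucasSet n) V) :
    ∃ D : Finset (Fin n), D.card = p ∧ V = Face (fun _ => false) D ∧
      chi D ∈ lucasSet n ∧ MaxInd (chi D) := by
  obtain ⟨hVS, ⟨iso⟩, hmax⟩ := hV
  obtain ⟨c, D, hcard, rfl⟩ := cube_classify iso.symm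
  have hiso' : ∀ (E : Finset (Fin n)) (c' : Fin n → Bool), E.card = p + 1 →
      Nonempty ((Qgraph n).induce (Face c' E) ≃g Qgraph (p + 1)) := by
    intro E c' hE
    rw [← hE]
    exact ⟨faceIso c' E⟩
  have hcoff : ∀ j ∉ D, c j = false := by
    by_contra hcon
    push_neg at hcon
    obtain ⟨a, haD, hca⟩ := hcon
    have hca' : c a = true := by simpa using hca
    apply hmax
    refine ⟨Face c (insert a D), ?_, ?_, hiso' _ c
      (by rw [Finset.card_insert_of_notMem haD, hcard])⟩
    · rw [Set.ssubset_def]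
      constructor
      · intro x hx j hj
        exact hx j fun hD => hj (Finset.mem_insert_of_mem hD)
      · intro hsub
        have hy : Function.update c a false ∈ Face c (insert a D) := by
          intro j hj
          have hja : j ≠ a := fun h => hj (h ▸ Finset.mem_insert_self a D)
          rw [Function.update_of_ne hja]
        have := hsub hy a haD
        rw [Function.update_self] at this
        rw [hca'] at this
        exact Bool.false_ne_true this
    · intro x hx
      have hx' : Function.update x a true ∈ Face c D := by
        intro j hj
        by_cases hja : j = a
        · subst hja; rw [Function.update_self, hca']
        · rw [Function.update_of_ne hja]
          exact hx j fun hmem => (Finset.mem_insert.mp hmem).elim hja hj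
      refine lucas_mono (fun j hj => ?_) (hVS hx')
      by_cases hja : j = a
      · subst hja; rw [Function.update_self]
      · rwa [Function.update_of_ne hja]
  have hVeq : Face c D = Face (fun _ => false) D := face_congr hcoff
  have hchimem : chi D ∈ Face c D := hVeq ▸ chi_mem_face_zero D
  refine ⟨D, hcard, hVeq, hVS hchimem, ?_⟩
  intro a ha hupd
  have haD : a ∉ D := by
    intro hmem
    rw [(chi_apply D a).mpr hmem] at ha
    exact absurd ha (by decide)
  rw [update_chi] at hupd
  apply hmax
  refine ⟨Face (fun _ => false) (insert a D), ?_, face_zero_subset_lucas hupd,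
    hiso' _ _ (by rw [Finset.card_insert_of_notMem haD, hcard])⟩
  rw [hVeq, Set.ssubset_def]
  constructor
  · intro x hx j hj
    exact hx j fun hD => hj (Finset.mem_insert_of_mem hD)
  · intro hsub
    have := mem_face_zero_iff.mp (hsub (chi_mem_face_zero (insert a D))) a
      ((chi_apply _ a).mpr (Finset.mem_insert_self a D))
    exact haD this

lemma struct2 {D : Finset (Fin n)} (hcard : D.card = p)
    (hlucas : chi D ∈ lucasSet n) (hmaxind : MaxInd (chi D)) :
    IsMaxCube n p (lucasSet n) (Face (fun _ => false) D) := by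
  refine ⟨face_zero_subset_lucas hlucas, ?_, ?_⟩
  · rw [← hcard]
    exact ⟨faceIso _ D⟩
  · rintro ⟨V', hss, hsub', ⟨g⟩⟩
    obtain ⟨c', D', -, rfl⟩ := cube_classify g.symm
    have hc' : ∀ j ∉ D', c' j = false := fun j hj =>
      ((hss.1 (zero_mem_face_zero D)) j hj).symm
    obtain ⟨x, hxV', hxV⟩ := Set.exists_of_ssubset hss
    have hxj : ∃ j, j ∉ D ∧ x j = true := by
      by_contra hcon
      push_neg at hcon
      exact hxV (mem_face_zero_iff.mpr fun j hj => by
        by_contra hjD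
        exact (by simpa using hcon j hjD : x j ≠ true) hj)
    obtain ⟨j, hjD, hxjt⟩ := hxj
    have hjD' : j ∈ D' := by
      by_contra hc
      rw [hxV' j hc, hc' j hc] at hxjt
      exact Bool.false_ne_true hxjt
    have hDD' : D ⊆ D' := by
      intro k hk
      by_contra hc
      have := hss.1 (chi_mem_face_zero D) k hc
      rw [(chi_apply D k).mpr hk, hc' k hc] at this
      exact absurd this (by decide)
    have hchiD' : chi D' ∈ Face c' D' := fun k hk => by
      rw [hc' k hk]; simp [chi, hk]
    have hlt : chi (insert j D) ∈ lucasSet n := by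
      refine lucas_mono (fun k hk => ?_) (hsub' hchiD')
      rw [chi_apply] at hk ⊢
      rcases Finset.mem_insert.mp hk with h | h
      · exact h ▸ hjD'
      · exact hDD' h
    have : chi D j = false := by simp [chi, hjD]
    rw [← update_chi] at hlt
    exact hmaxind j this hlt

/-! ### block strings -/

lemma bs_single (a : ℕ) : blockString [a] = List.replicate a false := by
  simp [blockString, List.intercalate]

lemma bs_cons (a : ℕ) {rest : List ℕ} (h : rest ≠ []) :
    blockString (a :: rest) = List.replicate a false ++ true :: blockString rest := by
  obtain ⟨b, t, rfl⟩ := List.exists_cons_of_ne_nil h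
  simp [blockString, List.intercalate, List.intersperse]

lemma bs_length : ∀ {l : List ℕ}, l ≠ [] → (blockString l).length = l.sum + l.length - 1 := by
  intro l
  induction l with
  | nil => intro h; exact absurd rfl h
  | cons a rest ih =>
    intro _
    rcases eq_or_ne rest [] with rfl | hne
    · rw [bs_single]; simp
    · have hlen : 1 ≤ rest.length := List.length_pos_iff.mpr hne
      rw [bs_cons a hne]
      have := ih hne
      simp only [List.length_append, List.length_replicate, List.length_cons, this,
        List.sum_cons]
      omega

def sfun (l : List ℕ) (i : ℕ) : Bool := (blockString l).getD i false

lemma sfun_single (a i : ℕ) : sfun [a] i = false := by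
  rw [sfun, bs_single]
  by_cases h : i < a
  · rw [List.getD_eq_getElem _ _ (by simpa using h)]
    exact List.getElem_replicate ..
  · exact List.getD_eq_default _ _ (by simpa using le_of_not_gt h)

lemma sfun_cons (a : ℕ) {rest : List ℕ} (h : rest ≠ []) (i : ℕ) :
    sfun (a :: rest) i =
      if i < a then false else if i = a then true else sfun rest (i - (a+1)) := by
  rw [sfun, bs_cons a h]
  by_cases h1 : i < a
  · rw [if_pos h1, List.getD_append _ _ _ _ (by simpa using h1),
      List.getD_eq_getElem _ _ (by simpa using h1)]
    exact List.getElem_replicate ..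
  · rw [if_neg h1]
    have hge : a ≤ i := le_of_not_gt h1
    rw [List.getD_append_right _ _ _ _ (by simpa using hge), List.length_replicate]
    by_cases h2 : i = a
    · subst h2
      rw [if_pos rfl, Nat.sub_self]
      rfl
    · rw [if_neg h2]
      have : i - a = (i - (a+1)) + 1 := by omega
      rw [this, List.getD_cons_succ]
      rfl

def posl (l : List ℕ) (k : ℕ) : ℕ := (l.take (k+1)).sum + k

lemma posl_zero (a : ℕ) (rest : List ℕ) : posl (a :: rest) 0 = a := by
  simp [posl]

lemma posl_cons_succ (a : ℕ) (rest : List ℕ) (k : ℕ) :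
    posl (a :: rest) (k+1) = a + 1 + posl rest k := by
  rw [posl, posl]
  have : List.take (k+2) (a :: rest) = a :: List.take (k+1) rest := rfl
  rw [this, List.sum_cons]
  omega

lemma posl_succ (l : List ℕ) (k : ℕ) (h : k + 1 < l.length) :
    posl l (k+1) = posl l k + l[k+1] + 1 := by
  rw [posl, posl, List.sum_take_succ l (k+1) h]
  omega

lemma posl_lt (l : List ℕ) : ∀ k' k, k < k' → k' < l.length → posl l k < posl l k' := by
  intro k'
  induction k' with
  | zero => intro k h; omega
  | succ m ih =>
    intro k h hlen
    have hstep : posl l m < posl l (m+1) := by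
      rw [posl_succ l m hlen]
      omega
    rcases Nat.lt_succ_iff_lt_or_eq.mp h with h' | h'
    · exact lt_trans (ih k h' (by omega)) hstep
    · subst h'; exact hstep

lemma sfun_iff : ∀ (l : List ℕ), 2 ≤ l.length → ∀ i,
    (sfun l i = true ↔ ∃ k, k + 1 < l.length ∧ i = posl l k) := by
  intro l
  induction l with
  | nil => intro h; simp at h
  | cons a rest ih =>
    intro hlen i
    have hrest : rest ≠ [] := by
      intro h; subst h; simp at hlen
    have hr1 : 1 ≤ rest.length := List.length_pos_iff.mpr hrest
    rw [sfun_cons a hrest]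
    by_cases h1 : i < a
    · rw [if_pos h1]
      simp only [Bool.false_eq_true, false_iff]
      rintro ⟨k, hk, rfl⟩
      have hge : a ≤ posl (a :: rest) k := by
        rw [posl]
        have ht : List.take (k+1) (a :: rest) = a :: List.take k rest := rfl
        rw [ht, List.sum_cons]
        omega
      omega
    · rw [if_neg h1]
      by_cases h2 : i = a
      · subst h2
        rw [if_pos rfl]
        simp only [true_iff]
        exact ⟨0, by simp only [List.length_cons, List.length_nil]; omega, (posl_zero _ rest).symm⟩
      · rw [if_neg h2]
        have hgt : a < i := by omega
        by_cases h3 : 2 ≤ rest.length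
        · rw [ih h3 (i - (a+1))]
          constructor
          · rintro ⟨k, hk, he⟩
            refine ⟨k+1, by simp only [List.length_cons, List.length_nil]; omega, ?_⟩
            rw [posl_cons_succ]
            omega
          · rintro ⟨k, hk, he⟩
            match k with
            | 0 =>
              rw [posl_zero] at he
              exact absurd he h2
            | k+1 =>
              rw [posl_cons_succ] at he
              refine ⟨k, by simp only [List.length_cons, List.length_nil] at hk; omega, by omega⟩
        · have h4 : rest.length = 1 := by omega
          obtain ⟨b, rfl⟩ := List.length_eq_one_iff.mp h4
          rw [sfun_single]
          simp only [Bool.false_eq_true, false_iff]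
          rintro ⟨k, hk, he⟩
          simp only [List.length_cons, List.length_nil] at hk
          have hk0 : k = 0 := by omega
          subst hk0
          rw [posl_zero] at he
          exact h2 he

/-! ### blocksOf : recovering the block lengths of a string -/

def blocksOf : List Bool → List ℕ
  | [] => [0]
  | true :: r => 0 :: blocksOf r
  | false :: r =>
    match blocksOf r with
    | [] => [1]
    | k :: ks => (k+1) :: ks

lemma blocksOf_ne_nil (s : List Bool) : blocksOf s ≠ [] := by
  match s with
  | [] => simp [blocksOf]
  | true :: r => simp [blocksOf]
  | false :: r =>
    cases h : blocksOf r with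
    | nil => simp [blocksOf, h]
    | cons k ks => simp [blocksOf, h]

lemma blocksOf_false {r : List Bool} {k : ℕ} {ks : List ℕ} (h : blocksOf r = k :: ks) :
    blocksOf (false :: r) = (k+1) :: ks := by
  simp [blocksOf, h]

lemma bs_shift (k : ℕ) (ks : List ℕ) :
    blockString ((k+1) :: ks) = false :: blockString (k :: ks) := by
  cases ks with
  | nil =>
    rw [bs_single, bs_single, List.replicate_succ]
  | cons b t =>
    rw [bs_cons _ (by simp : (b :: t : List ℕ) ≠ []),
      bs_cons _ (by simp : (b :: t : List ℕ) ≠ []), List.replicate_succ]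
    rfl

lemma bs_blocksOf : ∀ s : List Bool, blockString (blocksOf s) = s := by
  intro s
  induction s with
  | nil => simp [blocksOf, bs_single]
  | cons head r ih =>
    cases head with
    | true =>
      have : blocksOf (true :: r) = 0 :: blocksOf r := by simp [blocksOf]
      rw [this, bs_cons 0 (blocksOf_ne_nil r), ih]
      rfl
    | false =>
      obtain ⟨k, ks, hk⟩ := List.exists_cons_of_ne_nil (blocksOf_ne_nil r)
      rw [blocksOf_false hk, bs_shift, ← hk, ih]

lemma blocksOf_length : ∀ s : List Bool, (blocksOf s).length = s.count true + 1 := by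
  intro s
  induction s with
  | nil => simp [blocksOf]
  | cons head r ih =>
    cases head with
    | true =>
      have : blocksOf (true :: r) = 0 :: blocksOf r := by simp [blocksOf]
      rw [this]
      simp [List.count_cons, ih]
    | false =>
      obtain ⟨k, ks, hk⟩ := List.exists_cons_of_ne_nil (blocksOf_ne_nil r)
      rw [blocksOf_false hk]
      have := ih
      rw [hk] at this
      simp only [List.length_cons, List.length_nil] at this ⊢
      simp [List.count_cons, this]

lemma count_ofFn : ∀ (m : ℕ) (t : Fin m → Bool), (List.ofFn t).count true = wt t := by
  intro m
  induction m with
  | zero =>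
    intro t
    rw [wt_def]
    simp
  | succ m ih =>
    intro t
    rw [List.ofFn_succ, List.count_cons, ih (fun i => t i.succ)]
    rw [wt_def, wt_def, Finset.card_filter, Finset.card_filter, Fin.sum_univ_succ]
    cases h : t 0 <;> simp [h]
    omega

lemma getD_ofFn (m : ℕ) (t : Fin m → Bool) (i : Fin m) :
    (List.ofFn t).getD (i : ℕ) false = t i := by
  rw [List.getD_eq_getElem _ _ (by simpa using i.2), List.getElem_ofFn]

/-! ### ℕ-level predicates -/

def NLucas (n : ℕ) (q : ℕ → Bool) : Prop :=
  (∀ i, i + 1 < n → ¬(q i = true ∧ q (i+1) = true)) ∧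
    (1 ≤ n → ¬(q 0 = true ∧ q (n-1) = true))

def NMax (n : ℕ) (q : ℕ → Bool) : Prop :=
  ∀ a, a < n → q a = false →
    (1 ≤ a ∧ q (a-1) = true) ∨ (a + 1 < n ∧ q (a+1) = true) ∨
    (a = 0 ∧ q (n-1) = true) ∨ (a = n-1 ∧ q 0 = true)

section comb

variable {l : List ℕ} {p n : ℕ}

lemma hq_iff (hlen : l.length = p + 1) (hp : 1 ≤ p) (i : ℕ) :
    sfun l i = true ↔ ∃ k, k < p ∧ i = posl l k := by
  rw [sfun_iff l (by omega)]
  constructor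
  · rintro ⟨k, hk, he⟩; exact ⟨k, by omega, he⟩
  · rintro ⟨k, hk, he⟩; exact ⟨k, by omega, he⟩

lemma l_ne_nil (hlen : l.length = p + 1) : l ≠ [] := by
  intro h; rw [h] at hlen; simp at hlen

lemma headI_eq (hlen : l.length = p + 1) : posl l 0 = l.headI := by
  obtain ⟨a, rest, rfl⟩ := List.exists_cons_of_ne_nil (l_ne_nil hlen)
  rw [posl_zero, List.headI]

lemma getLastI_eq (hlen : l.length = p + 1) : l.getLastI = l[p]'(by omega) := by
  have hne := l_ne_nil hlen
  have hidx : l.length - 1 = p := by omega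
  simp only [List.getLastI_eq_getLast?, List.getLast?_eq_getLast hne, Option.iget_some, Option.getD_some,
    List.getLast_eq_getElem, hidx]

lemma last_eq (hlen : l.length = p + 1) (hp : 1 ≤ p) :
    posl l (p-1) + l.getLastI + 1 = l.sum + p := by
  have hidx : p < l.length := by omega
  have h1 : (l.take (p+1)).sum = (l.take p).sum + l.getLastI := by
    rw [getLastI_eq hlen]
    exact List.sum_take_succ l p hidx
  have h2 : l.take (p+1) = l := by
    rw [← hlen, List.take_length]
  have h3 : posl l (p-1) = (l.take p).sum + (p-1) := by
    have hid : p - 1 + 1 = p := by omega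
    rw [posl, hid]
  rw [h2] at h1
  omega

lemma posl_le_of_le (hlen : l.length = p + 1) {k k' : ℕ} (h : k ≤ k') (h' : k' < p) :
    posl l k ≤ posl l k' := by
  rcases eq_or_lt_of_le h with rfl | hlt
  · exact le_refl _
  · exact le_of_lt (posl_lt l k' k hlt (by omega))

lemma posl_lt_n (hlen : l.length = p + 1) (hsum : l.sum + p = n) (hp : 1 ≤ p)
    {k : ℕ} (hk : k < p) : posl l k < n := by
  have h1 : posl l k ≤ posl l (p-1) := posl_le_of_le hlen (by omega) (by omega)
  have h2 := last_eq hlen hp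
  omega

lemma posl_inj (hlen : l.length = p + 1) {k k' : ℕ} (hk : k < p) (hk' : k' < p)
    (h : posl l k = posl l k') : k = k' := by
  rcases lt_trichotomy k k' with hlt | he | hlt
  · exact absurd h (Nat.ne_of_lt (posl_lt l k' k hlt (by omega)))
  · exact he
  · exact absurd h.symm (Nat.ne_of_lt (posl_lt l k k' hlt (by omega)))

lemma q_true (hlen : l.length = p + 1) (hp : 1 ≤ p) {k : ℕ} (hk : k < p) :
    sfun l (posl l k) = true :=
  (hq_iff hlen hp _).mpr ⟨k, hk, rfl⟩

lemma q_eq_false_of (hlen : l.length = p + 1) (hp : 1 ≤ p) {i : ℕ}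
    (h : ∀ k, k < p → i ≠ posl l k) : sfun l i = false := by
  cases hs : sfun l i with
  | false => rfl
  | true =>
    obtain ⟨k, hk, he⟩ := (hq_iff hlen hp i).mp hs
    exact absurd he (h k hk)

lemma q_false_low (hlen : l.length = p + 1) (hp : 1 ≤ p) {i : ℕ}
    (h : i < posl l 0) : sfun l i = false := by
  refine q_eq_false_of hlen hp fun k hk he => ?_
  have := posl_le_of_le hlen (Nat.zero_le k) hk
  omega

lemma q_false_high (hlen : l.length = p + 1) (hp : 1 ≤ p) {i : ℕ}
    (h : posl l (p-1) < i) : sfun l i = false := by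
  refine q_eq_false_of hlen hp fun k hk he => ?_
  have := posl_le_of_le hlen (show k ≤ p - 1 by omega) (by omega)
  omega

lemma q_false_mid (hlen : l.length = p + 1) (hp : 1 ≤ p) {k i : ℕ} (hk : k + 1 < p)
    (h1 : posl l k < i) (h2 : i < posl l (k+1)) : sfun l i = false := by
  refine q_eq_false_of hlen hp fun k' hk' he => ?_
  rcases le_or_gt k' k with hle | hgt
  · have := posl_le_of_le hlen hle (by omega)
    omega
  · have := posl_le_of_le hlen (show k + 1 ≤ k' by omega) hk'
    omega

lemma mem_middle (hlen : l.length = p + 1) (x : ℕ) :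
    x ∈ l.tail.dropLast ↔ ∃ m, m + 1 < p ∧ ∃ (h : m + 1 < l.length), l[m+1] = x := by
  rw [List.mem_iff_getElem]
  have hL : l.tail.dropLast.length = p - 1 := by
    rw [List.length_dropLast, List.length_tail, hlen]
    omega
  constructor
  · rintro ⟨m, hm, he⟩
    rw [hL] at hm
    refine ⟨m, by omega, by omega, ?_⟩
    rw [← he, List.getElem_dropLast, List.getElem_tail]
  · rintro ⟨m, hm, hb, he⟩
    refine ⟨m, by rw [hL]; omega, ?_⟩
    rw [List.getElem_dropLast, List.getElem_tail]
    exact he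

lemma middle_bounds (hlen : l.length = p + 1)
    (h4 : ∀ x ∈ l.tail.dropLast, 1 ≤ x ∧ x ≤ 2) {k : ℕ} (h1 : 1 ≤ k) (h2 : k < p) :
    1 ≤ l[k]'(by omega) ∧ l[k]'(by omega) ≤ 2 := by
  apply h4
  rw [mem_middle hlen]
  exact ⟨k - 1, by omega, by omega, by congr 1; omega⟩

lemma cond_to (hlen : l.length = p + 1) (hsum : l.sum + p = n) (hp : 1 ≤ p)
    (h0 : l.headI ≤ 2) (h1 : l.getLastI ≤ 2) (h2 : 1 ≤ l.headI + l.getLastI)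
    (h3 : l.headI + l.getLastI ≤ 2) (h4 : ∀ x ∈ l.tail.dropLast, 1 ≤ x ∧ x ≤ 2) :
    NLucas n (sfun l) ∧ NMax n (sfun l) := by
  have hlast := last_eq hlen hp
  have hhead := headI_eq hlen
  constructor
  · constructor
    · rintro i hi ⟨ha, hb⟩
      obtain ⟨k, hk, he⟩ := (hq_iff hlen hp i).mp ha
      obtain ⟨k', hk', he'⟩ := (hq_iff hlen hp (i+1)).mp hb
      have hkk : k < k' := by
        by_contra hc
        have := posl_le_of_le hlen (le_of_not_gt hc) hk
        omega
      have heq : k' = k + 1 := by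
        by_contra hc
        have hlt1 : posl l k < posl l (k+1) := posl_lt l (k+1) k (by omega) (by omega)
        have hlt2 : posl l (k+1) < posl l k' := posl_lt l k' (k+1) (by omega) (by omega)
        omega
      subst heq
      have hstep := posl_succ l k (by omega)
      have hmb := middle_bounds hlen h4 (show 1 ≤ k + 1 by omega) hk'
      omega
    · rintro hn ⟨ha, hb⟩
      obtain ⟨k, hk, he⟩ := (hq_iff hlen hp 0).mp ha
      obtain ⟨k', hk', he'⟩ := (hq_iff hlen hp (n-1)).mp hb
      have e1 : posl l 0 = 0 := by
        have := posl_le_of_le hlen (Nat.zero_le k) hk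
        omega
      have e2 : posl l k' ≤ posl l (p-1) := posl_le_of_le hlen (by omega) (by omega)
      omega
  · intro a ha hfa
    by_cases hex : ∃ k, k < p ∧ posl l k ≤ a
    · set P : ℕ → Prop := fun k => posl l k ≤ a with hP
      obtain ⟨k0, hk0p, hk0le⟩ := hex
      set k := Nat.findGreatest P (p-1) with hkdef
      have hkP : P k := Nat.findGreatest_spec (m := k0) (by omega) hk0le
      have hkb : k ≤ p - 1 := Nat.findGreatest_le _
      have hkp : k < p := by omega
      have hne : posl l k ≠ a := fun he => by
        rw [← he, q_true hlen hp hkp] at hfa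
        exact Bool.noConfusion hfa
      have hklt : posl l k < a := lt_of_le_of_ne hkP hne
      by_cases hklast : k = p - 1
      · rw [hklast] at hklt
        have hle : a ≤ posl l (p-1) + l.getLastI := by omega
        by_cases ha1 : a = posl l (p-1) + 1
        · refine Or.inl ⟨by omega, ?_⟩
          rw [show a - 1 = posl l (p-1) by omega]
          exact q_true hlen hp (by omega)
        · have ha2 : a = posl l (p-1) + 2 := by omega
          have hl2 : l.getLastI = 2 := by omega
          have hh0 : l.headI = 0 := by omega
          refine Or.inr (Or.inr (Or.inr ⟨by omega, ?_⟩))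
          rw [show (0:ℕ) = posl l 0 by omega]
          exact q_true hlen hp (by omega)
      · have hk1p : k + 1 < p := by omega
        have hgt : a < posl l (k+1) := by
          by_contra hc
          exact Nat.findGreatest_is_greatest (by omega : k < k + 1) (by omega)
            (le_of_not_gt hc)
        have hstep := posl_succ l k (by omega)
        have hmb := middle_bounds hlen h4 (show 1 ≤ k + 1 by omega) hk1p
        by_cases ha1 : a = posl l k + 1
        · refine Or.inl ⟨by omega, ?_⟩
          rw [show a - 1 = posl l k by omega]
          exact q_true hlen hp hkp
        · have ha2 : a + 1 = posl l (k+1) := by omega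
          refine Or.inr (Or.inl ⟨?_, ?_⟩)
          · have := posl_lt_n hlen hsum hp hk1p
            omega
          · rw [ha2]
            exact q_true hlen hp hk1p
    · push_neg at hex
      have hlow : a < posl l 0 := by
        rcases lt_or_ge a (posl l 0) with h | h
        · exact h
        · exact absurd h (not_le.mpr (hex 0 (by omega)))
      by_cases hnb : a + 1 = posl l 0
      · refine Or.inr (Or.inl ⟨?_, ?_⟩)
        · have := posl_lt_n hlen hsum hp (show 0 < p by omega)
          omega
        · rw [hnb]
          exact q_true hlen hp (by omega)
      · have ha0 : a = 0 := by omega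
        have hh2 : l.headI = 2 := by omega
        have hl0 : l.getLastI = 0 := by omega
        refine Or.inr (Or.inr (Or.inl ⟨ha0, ?_⟩))
        rw [show n - 1 = posl l (p-1) by omega]
        exact q_true hlen hp (by omega)

lemma to_cond (hlen : l.length = p + 1) (hsum : l.sum + p = n) (hp : 1 ≤ p)
    (hlucas : NLucas n (sfun l)) (hmax : NMax n (sfun l)) :
    l.headI ≤ 2 ∧ l.getLastI ≤ 2 ∧ 1 ≤ l.headI + l.getLastI ∧
      l.headI + l.getLastI ≤ 2 ∧ ∀ x ∈ l.tail.dropLast, 1 ≤ x ∧ x ≤ 2 := by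
  have hlast := last_eq hlen hp
  have hhead := headI_eq hlen
  have hplt : posl l (p-1) < n := posl_lt_n hlen hsum hp (by omega)
  -- internal bounds
  have hint : ∀ x ∈ l.tail.dropLast, 1 ≤ x ∧ x ≤ 2 := by
    intro x hx
    obtain ⟨m, hm, hb, rfl⟩ := (mem_middle hlen x).mp hx
    have hstep := posl_succ l m (by omega)
    have hm1n : posl l (m+1) < n := posl_lt_n hlen hsum hp (by omega)
    constructor
    · by_contra hc
      have hx0 : l[m+1] = 0 := by omega
      have hv : posl l (m+1) = posl l m + 1 := by omega
      refine hlucas.1 (posl l m) (by omega) ⟨q_true hlen hp (by omega), ?_⟩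
      rw [← hv]
      exact q_true hlen hp (by omega)
    · by_contra hc
      have hc3 : 3 ≤ l[m+1] := by omega
      have hfa : sfun l (posl l m + 2) = false :=
        q_false_mid (k := m) hlen hp (by omega) (by omega) (by omega)
      rcases hmax (posl l m + 2) (by omega) hfa with ⟨-, ht⟩ | ⟨-, ht⟩ | ⟨he, -⟩ | ⟨he, -⟩
      · rw [show posl l m + 2 - 1 = posl l m + 1 by omega,
          q_false_mid (k := m) hlen hp (show m + 1 < p by omega) (by omega) (by omega)] at ht
        exact absurd ht (by simp)
      · rw [show posl l m + 2 + 1 = posl l m + 3 by omega,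
          q_false_mid (k := m) hlen hp (show m + 1 < p by omega) (by omega) (by omega)] at ht
        exact absurd ht (by simp)
      · omega
      · have : posl l (m+1) ≤ posl l (p-1) := posl_le_of_le hlen (by omega) (by omega)
        omega
  -- headI ≤ 2
  have hh2 : l.headI ≤ 2 := by
    by_contra hc
    have hc3 : 3 ≤ posl l 0 := by omega
    have h0p : posl l 0 ≤ posl l (p-1) := posl_le_of_le hlen (by omega) (by omega)
    have hfa : sfun l (posl l 0 - 2) = false := q_false_low hlen hp (by omega)
    rcases hmax (posl l 0 - 2) (by omega) hfa with ⟨-, ht⟩ | ⟨-, ht⟩ | ⟨he, -⟩ | ⟨he, -⟩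
    · rw [q_false_low hlen hp (by omega)] at ht
      exact absurd ht (by simp)
    · rw [show posl l 0 - 2 + 1 = posl l 0 - 1 by omega,
        q_false_low hlen hp (by omega)] at ht
      exact absurd ht (by simp)
    · omega
    · omega
  -- getLastI ≤ 2
  have hl2 : l.getLastI ≤ 2 := by
    by_contra hc
    have hc3 : 3 ≤ l.getLastI := by omega
    have hfa : sfun l (posl l (p-1) + 2) = false := q_false_high hlen hp (by omega)
    rcases hmax (posl l (p-1) + 2) (by omega) hfa with ⟨-, ht⟩ | ⟨-, ht⟩ | ⟨he, -⟩ | ⟨he, -⟩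
    · rw [show posl l (p-1) + 2 - 1 = posl l (p-1) + 1 by omega,
        q_false_high hlen hp (by omega)] at ht
      exact absurd ht (by simp)
    · rw [q_false_high hlen hp (by omega)] at ht
      exact absurd ht (by simp)
    · omega
    · omega
  -- 1 ≤ headI + lastI
  have hge1 : 1 ≤ l.headI + l.getLastI := by
    by_contra hc
    have hh0 : l.headI = 0 := by omega
    have hl0 : l.getLastI = 0 := by omega
    refine hlucas.2 (by omega) ⟨?_, ?_⟩
    · rw [show (0:ℕ) = posl l 0 by omega]
      exact q_true hlen hp (by omega)
    · rw [show n - 1 = posl l (p-1) by omega]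
      exact q_true hlen hp (by omega)
  -- headI + lastI ≤ 2
  have hle2 : l.headI + l.getLastI ≤ 2 := by
    by_contra hc
    rcases (by omega : (1 ≤ l.headI ∧ 2 ≤ l.getLastI) ∨ (2 ≤ l.headI ∧ 1 ≤ l.getLastI))
      with ⟨ha, hb⟩ | ⟨ha, hb⟩
    · have hfa : sfun l (n-1) = false := q_false_high hlen hp (by omega)
      rcases hmax (n-1) (by omega) hfa with ⟨-, ht⟩ | ⟨hlt, -⟩ | ⟨he, -⟩ | ⟨-, ht⟩
      · rw [show n - 1 - 1 = n - 2 by omega, q_false_high hlen hp (by omega)] at ht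
        exact absurd ht (by simp)
      · omega
      · omega
      · rw [q_false_low hlen hp (by omega)] at ht
        exact absurd ht (by simp)
    · have hfa : sfun l 0 = false := q_false_low hlen hp (by omega)
      rcases hmax 0 (by omega) hfa with ⟨ha1, -⟩ | ⟨-, ht⟩ | ⟨-, ht⟩ | ⟨he, -⟩
      · omega
      · rw [q_false_low hlen hp (by omega)] at ht
        exact absurd ht (by simp)
      · rw [q_false_high hlen hp (by omega)] at ht
        exact absurd ht (by simp)
      · omega
  exact ⟨hh2, hl2, hge1, hle2, hint⟩

end comb

/-! ### translations between `Fin`-level and `ℕ`-level conditions -/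

lemma exists_true_of_wt {t : Fin m → Bool} (h : 1 ≤ wt t) : ∃ a, t a = true := by
  rw [wt_def] at h
  obtain ⟨a, ha⟩ := Finset.card_pos.mp
    (show 0 < (Finset.univ.filter fun i => t i = true).card by omega)
  exact ⟨a, (mem_filter.mp ha).2⟩

lemma ofBlocks_apply (l : List ℕ) (i : Fin n) : ofBlocks n l i = sfun l ↑i := rfl

lemma wt_ofBlocks {l : List ℕ} {p n : ℕ} (hlen : l.length = p + 1) (hsum : l.sum + p = n)
    (hp : 1 ≤ p) : wt (ofBlocks n l) = p := by
  have hlt : ∀ k : Fin p, posl l ↑k < n := fun k => posl_lt_n hlen hsum hp k.2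
  have hinj : Function.Injective (fun k : Fin p => (⟨posl l ↑k, hlt k⟩ : Fin n)) := by
    intro k k' h
    exact Fin.ext (posl_inj hlen k.2 k'.2 (congrArg Fin.val h))
  have himg : (Finset.univ.filter fun i : Fin n => ofBlocks n l i = true)
      = Finset.image (fun k : Fin p => (⟨posl l ↑k, hlt k⟩ : Fin n)) Finset.univ := by
    ext i
    simp only [Finset.mem_filter, Finset.mem_univ, true_and, Finset.mem_image]
    rw [ofBlocks_apply, hq_iff hlen hp]
    constructor
    · rintro ⟨k, hk, he⟩
      exact ⟨⟨k, hk⟩, Fin.ext he.symm⟩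
    · rintro ⟨k, he⟩
      exact ⟨↑k, k.2, (congrArg Fin.val he).symm⟩
  rw [wt_def, himg, Finset.card_image_of_injective _ hinj, Finset.card_univ,
    Fintype.card_fin]

lemma lucas_iff_nlucas {t : Fin n → Bool} {q : ℕ → Bool}
    (ht : ∀ i : Fin n, t i = q ↑i) : t ∈ lucasSet n ↔ NLucas n q := by
  constructor
  · rintro ⟨hfib, hend⟩
    constructor
    · intro i hi hqq
      refine hfib ⟨i, by omega⟩ ⟨i+1, hi⟩ rfl ⟨?_, ?_⟩
      · rw [ht ⟨i, by omega⟩]; exact hqq.1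
      · rw [ht ⟨i+1, hi⟩]; exact hqq.2
    · intro hn hqq
      refine hend ⟨0, by omega⟩ ⟨n-1, by omega⟩ rfl rfl ⟨?_, ?_⟩
      · rw [ht ⟨0, by omega⟩]; exact hqq.1
      · rw [ht ⟨n-1, by omega⟩]; exact hqq.2
  · rintro ⟨hfib, hend⟩
    constructor
    · intro i j hij ⟨h1, h2⟩
      refine hfib ↑i (by have := j.2; omega) ⟨?_, ?_⟩
      · rw [← ht i]; exact h1
      · rw [← hij, ← ht j]; exact h2
    · intro i j hi hj ⟨h1, h2⟩
      refine hend (by have := i.2; omega) ⟨?_, ?_⟩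
      · rw [← hi, ← ht i]; exact h1
      · rw [← hj, ← ht j]; exact h2

lemma maxind_to_nmax {t : Fin n → Bool} {q : ℕ → Bool} (ht : ∀ i : Fin n, t i = q ↑i)
    (hn : 2 ≤ n) (htl : t ∈ lucasSet n) (hm : MaxInd t) : NMax n q := by
  intro a ha hfa
  set af : Fin n := ⟨a, ha⟩ with hafdef
  have htaf : t af = false := by rw [ht af]; exact hfa
  have hnl := hm af htaf
  set u := Function.update t af true with hu
  have huaf : u af = true := Function.update_self af true t
  simp only [lucasSet, fibSet, Set.mem_setOf_eq] at hnl
  rcases not_and_or.mp hnl with hnf | hnE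
  · push_neg at hnf
    obtain ⟨i, j, hij, hui, huj⟩ := hnf
    by_cases hia : i = af
    · have hiv : (↑i : ℕ) = a := by rw [hia]
      have hja : j ≠ af := by
        intro h
        have hjv : (↑j : ℕ) = a := by rw [h]
        omega
      have htj : t j = true := by rw [← Function.update_of_ne hja true t]; exact huj
      refine Or.inr (Or.inl ⟨?_, ?_⟩)
      · have := j.2
        omega
      · have hjv : (↑j : ℕ) = a + 1 := by omega
        rw [← hjv, ← ht j]
        exact htj
    · by_cases hja : j = af
      · have hjv : (↑j : ℕ) = a := by rw [hja]
        have hti : t i = true := by rw [← Function.update_of_ne hia true t]; exact hui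
        refine Or.inl ⟨by omega, ?_⟩
        have hiv : (↑i : ℕ) = a - 1 := by omega
        rw [← hiv, ← ht i]
        exact hti
      · exact absurd ⟨by rw [← Function.update_of_ne hia true t]; exact hui,
          by rw [← Function.update_of_ne hja true t]; exact huj⟩ (htl.1 i j hij)
  · push_neg at hnE
    obtain ⟨i, j, hi, hj, hui, huj⟩ := hnE
    by_cases hia : i = af
    · have hiv : (↑i : ℕ) = a := by rw [hia]
      have hja : j ≠ af := by
        intro h
        have hjv : (↑j : ℕ) = a := by rw [h]
        omega
      have htj : t j = true := by rw [← Function.update_of_ne hja true t]; exact huj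
      refine Or.inr (Or.inr (Or.inl ⟨by omega, ?_⟩))
      rw [← hj, ← ht j]
      exact htj
    · by_cases hja : j = af
      · have hjv : (↑j : ℕ) = a := by rw [hja]
        have hti : t i = true := by rw [← Function.update_of_ne hia true t]; exact hui
        refine Or.inr (Or.inr (Or.inr ⟨by omega, ?_⟩))
        rw [← hi, ← ht i]
        exact hti
      · exact absurd ⟨by rw [← Function.update_of_ne hia true t]; exact hui,
          by rw [← Function.update_of_ne hja true t]; exact huj⟩ (htl.2 i j hi hj)

lemma nmax_to_maxind {t : Fin n → Bool} {q : ℕ → Bool} (ht : ∀ i : Fin n, t i = q ↑i)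
    (hnm : NMax n q) : MaxInd t := by
  intro a hta hlu
  have hfa : q ↑a = false := by rw [← ht a]; exact hta
  have hn1 : 1 ≤ n := by have := a.2; omega
  rcases hnm ↑a a.2 hfa with ⟨h1, ht1⟩ | ⟨h1, ht1⟩ | ⟨h1, ht1⟩ | ⟨h1, ht1⟩
  · have hia : (⟨↑a - 1, by omega⟩ : Fin n) ≠ a := Fin.ne_of_val_ne (by simp; omega)
    refine hlu.1 ⟨↑a - 1, by omega⟩ a (by simp; omega) ⟨?_, ?_⟩
    · rw [Function.update_of_ne hia true t, ht]
      exact ht1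
    · exact Function.update_self a true t
  · have hja : (⟨↑a + 1, h1⟩ : Fin n) ≠ a := Fin.ne_of_val_ne (by simp)
    refine hlu.1 a ⟨↑a + 1, h1⟩ (by simp) ⟨?_, ?_⟩
    · exact Function.update_self a true t
    · rw [Function.update_of_ne hja true t, ht]
      exact ht1
  · refine hlu.2 a ⟨n - 1, by omega⟩ h1 (by simp) ⟨Function.update_self a true t, ?_⟩
    by_cases hja : (⟨n - 1, by omega⟩ : Fin n) = a
    · rw [hja]
      exact Function.update_self a true t
    · rw [Function.update_of_ne hja true t, ht]
      exact ht1
  · refine hlu.2 ⟨0, by omega⟩ a (by simp) h1 ⟨?_, Function.update_self a true t⟩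
    by_cases hia : (⟨0, by omega⟩ : Fin n) = a
    · rw [hia]
      exact Function.update_self a true t
    · rw [Function.update_of_ne hia true t, ht]
      exact ht1

/-! ### main theorem -/

theorem main (n p : ℕ) (hp : 1 ≤ p) :
    (∀ (V : Set (Fin n → Bool)) (b t : Fin n → Bool),
      IsMaxCube n p (lucasSet n) V →
      b ∈ V → (∀ x ∈ V, wt b ≤ wt x) →
      t ∈ V → (∀ x ∈ V, wt x ≤ wt t) →
      b = (fun _ => false) ∧
      ∃ l : List ℕ, l.length = p + 1 ∧ l.sum + p = n ∧
        l.headI ≤ 2 ∧ l.getLastI ≤ 2 ∧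
        1 ≤ l.headI + l.getLastI ∧ l.headI + l.getLastI ≤ 2 ∧
        (∀ x ∈ l.tail.dropLast, 1 ≤ x ∧ x ≤ 2) ∧ t = ofBlocks n l) ∧
    (∀ l : List ℕ, l.length = p + 1 → l.sum + p = n →
      l.headI ≤ 2 → l.getLastI ≤ 2 →
      1 ≤ l.headI + l.getLastI → l.headI + l.getLastI ≤ 2 →
      (∀ x ∈ l.tail.dropLast, 1 ≤ x ∧ x ≤ 2) →
      ∃ V : Set (Fin n → Bool), IsMaxCube n p (lucasSet n) V ∧
        ofBlocks n l ∈ V ∧ ∀ x ∈ V, wt x ≤ wt (ofBlocks n l)) := by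
  constructor
  · intro V b t hMax hbV hbmin htV htmax
    obtain ⟨D, hcard, hVF, hchiL, hchiM⟩ := struct1 hMax
    have hsub := hMax.1
    have hzeroV : (fun _ : Fin n => false) ∈ V := by
      rw [hVF]; exact zero_mem_face_zero D
    have hb0 : wt b = 0 := by
      have := hbmin _ hzeroV
      rw [wt_false] at this
      omega
    have hb : b = fun _ => false := wt_eq_zero_iff.mp hb0
    have hchiV : chi D ∈ V := by rw [hVF]; exact chi_mem_face_zero D
    have hwge : D.card ≤ wt t := by
      rw [← wt_chi D]
      exact htmax _ hchiV
    have htchi : t = chi D := eq_chi_of_max (by rw [← hVF]; exact htV) hwge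
    have hwtt : wt t = p := by rw [htchi, wt_chi, hcard]
    have htl : t ∈ lucasSet n := hsub htV
    have hn2 : 2 ≤ n := by
      by_contra hc
      obtain ⟨a, hat⟩ := exists_true_of_wt (t := t) (by omega)
      have hvals := a.2
      exact htl.2 a a (by omega) (by omega) ⟨hat, hat⟩
    have hMt : MaxInd t := by rw [htchi]; exact hchiM
    set s : List Bool := List.ofFn t with hsdef
    set l : List ℕ := blocksOf s with hldef
    have hbs : blockString l = s := bs_blocksOf s
    have hlenl : l.length = p + 1 := by
      rw [hldef, blocksOf_length s, hsdef, count_ofFn n t, hwtt]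
    have hslen : s.length = n := by rw [hsdef, List.length_ofFn]
    have hsuml : l.sum + p = n := by
      have hbl := bs_length (l := l) (blocksOf_ne_nil s)
      rw [hbs, hslen, hlenl] at hbl
      omega
    have hts : ∀ i : Fin n, t i = sfun l ↑i := by
      intro i
      rw [sfun, hbs, hsdef, getD_ofFn n t i]
    have hNL : NLucas n (sfun l) := (lucas_iff_nlucas hts).mp htl
    have hNM : NMax n (sfun l) := maxind_to_nmax hts hn2 htl hMt
    obtain ⟨hh2, hl2, hge1, hle2, hint⟩ := to_cond hlenl hsuml hp hNL hNM
    refine ⟨hb, l, hlenl, hsuml, hh2, hl2, hge1, hle2, hint, ?_⟩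
    funext i
    rw [ofBlocks_apply l i, ← hts i]
  · intro l hlen hsum hh2 hl2 hge1 hle2 hint
    obtain ⟨hNL, hNM⟩ := cond_to hlen hsum hp hh2 hl2 hge1 hle2 hint
    have hts : ∀ i : Fin n, ofBlocks n l i = sfun l ↑i := fun i => rfl
    have htl : ofBlocks n l ∈ lucasSet n := (lucas_iff_nlucas hts).mpr hNL
    have htm : MaxInd (ofBlocks n l) := nmax_to_maxind hts hNM
    have hwtt : wt (ofBlocks n l) = p := wt_ofBlocks hlen hsum hp
    set D : Finset (Fin n) := Finset.univ.filter (fun i => ofBlocks n l i = true) with hD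
    have htchi : ofBlocks n l = chi D := by
      funext i
      by_cases h : ofBlocks n l i = true
      · exact h.trans ((chi_apply D i).mpr (mem_filter.mpr ⟨mem_univ _, h⟩)).symm
      · have hx : ofBlocks n l i = false := by simpa using h
        have hnD : i ∉ D := fun hm => h (mem_filter.mp hm).2
        rw [hx]
        symm
        simp [chi, hnD]
    have hcardD : D.card = p := by
      rw [hD, ← wt_def, hwtt]
    have hchiL : chi D ∈ lucasSet n := by rw [← htchi]; exact htl
    have hchiM : MaxInd (chi D) := by rw [← htchi]; exact htm
    refine ⟨Face (fun _ => false) D, struct2 hcardD hchiL hchiM, ?_, ?_⟩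
    · exact mem_face_zero_iff.mpr fun j hj => mem_filter.mpr ⟨mem_univ _, hj⟩
    · intro x hx
      have := wt_le_card_of_face hx
      omega

end LMC

/-- Characterization of maximal hypercubes of dimension `p ≥ 1` in the Lucas cube `Λ_n`:
the bottom vertex is `0^n` and the top vertex is `0^{l_0} 1 0^{l_1} 1 ⋯ 1 0^{l_p}` with
`∑ l_i = n - p`, `l_0 ≤ 2`, `l_p ≤ 2`, `1 ≤ l_0 + l_p ≤ 2` and `1 ≤ l_i ≤ 2` for
`1 ≤ i ≤ p - 1`; conversely, every such string is the top vertex of a maximal hypercube. -/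
theorem lucas_max_cubes (n p : ℕ) (hp : 1 ≤ p) :
    (∀ (V : Set (Fin n → Bool)) (b t : Fin n → Bool),
      IsMaxCube n p (lucasSet n) V →
      b ∈ V → (∀ x ∈ V, wt b ≤ wt x) →
      t ∈ V → (∀ x ∈ V, wt x ≤ wt t) →
      b = (fun _ => false) ∧
      ∃ l : List ℕ, l.length = p + 1 ∧ l.sum + p = n ∧
        l.headI ≤ 2 ∧ l.getLastI ≤ 2 ∧
        1 ≤ l.headI + l.getLastI ∧ l.headI + l.getLastI ≤ 2 ∧
        (∀ x ∈ l.tail.dropLast, 1 ≤ x ∧ x ≤ 2) ∧ t = ofBlocks n l) ∧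
    (∀ l : List ℕ, l.length = p + 1 → l.sum + p = n →
      l.headI ≤ 2 → l.getLastI ≤ 2 →
      1 ≤ l.headI + l.getLastI → l.headI + l.getLastI ≤ 2 →
      (∀ x ∈ l.tail.dropLast, 1 ≤ x ∧ x ≤ 2) →
      ∃ V : Set (Fin n → Bool), IsMaxCube n p (lucasSet n) V ∧
        ofBlocks n l ∈ V ∧ ∀ x ∈ V, wt x ≤ wt (ofBlocks n l)) :=
  LMC.main n p hp
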